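/- arXiv:2108.11148 — 2 statements merged into one kernel-verified Lean document; each statement's English description precedes it below -/
import Mathlib

section
/- Let g be a finite-dimensional real Lie algebra and n ⊆ g a nonzero nilpotent Lie ideal with dim(g/n) = 1, and let z := {X ∈ n | ∀ Y ∈ n, [X,Y] = 0} be the centre of n. Then the following are equivalent: (a) there exists ξ₀ ∈ g* with g(ξ₀) := {X ∈ g | ∀ Y ∈ g, ξ₀([X,Y]) = 0} = {0}; (b) [g,z] ≠ {0}, dim z = 1, and there exists a linear functional ℓ on n with {X ∈ n | ∀ Y ∈ n, ℓ([X,Y]) = 0} = z. -/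
/-!
If `ξ₀` has trivial isotropy, its Kirillov form `ω(X, Y) = ξ₀[X, Y]` is nondegenerate, so the
`ω`-orthogonal of the codimension-one ideal `n` is a line. It contains the centre `z`, which is
nonzero because `n` is nilpotent, hence equals it: so `dim z = 1` and `n(ξ₀|n) = z`, and
`[g, z] ≠ 0` since a nonzero `Z ∈ z` with `[g, Z] = 0` would lie in `g(ξ₀)`.

Conversely, write `z = ℝZ` and `[X, Z] = λZ` with `λ ≠ 0`. If `n(ℓ) = z` and `ℓ` vanished on `z`,
every `W` with `[n, W] ⊆ z` would lie in `n(ℓ) = z`; by the normalizer condition in the nilpotent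
algebra `n` this forces `z = n`, where any `ℓ` works. So we may take `ℓ(Z) ≠ 0`, and then every
extension `ξ` of `ℓ` to `g` has `g(ξ) = 0`: for `W = cX + N` with `N ∈ n`, `ξ[W, Z] = cλℓ(Z)`
forces `c = 0`, then `W ∈ n(ℓ) = ℝZ`, and `ξ[W, X]` forces `W = 0`.
-/

open Module

def centreOfIdeal (g : Type*) [LieRing g] [LieAlgebra ℝ g] (n : LieIdeal ℝ g) :
    Submodule ℝ g where
  carrier := {X | X ∈ n ∧ ∀ Y ∈ n, ⁅X, Y⁆ = 0}
  add_mem' := by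
    rintro a b ⟨ha, ha'⟩ ⟨hb, hb'⟩
    exact ⟨add_mem ha hb, fun Y hY => by rw [add_lie, ha' Y hY, hb' Y hY, add_zero]⟩
  zero_mem' := ⟨zero_mem n, fun Y _ => zero_lie Y⟩
  smul_mem' := by
    rintro c x ⟨hx, hx'⟩
    exact ⟨SMulMemClass.smul_mem c hx, fun Y hY => by rw [smul_lie, hx' Y hY, smul_zero]⟩

lemma Submodule.exists_sub_smul_mem_of_finrank_quotient_eq_one {K V : Type*} [Field K]
    [AddCommGroup V] [Module K V] {p : Submodule K V} (h : finrank K (V ⧸ p) = 1) {x : V}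
    (hx : x ∉ p) (w : V) : ∃ c : K, w - c • x ∈ p := by
  obtain ⟨c, hc⟩ := (finrank_eq_one_iff_of_nonzero' _ ((Submodule.Quotient.mk_eq_zero p).not.mpr
    hx)).mp h (Submodule.Quotient.mk w)
  exact ⟨c, (Submodule.Quotient.eq p).mp hc.symm⟩

lemma LieSubmodule.eq_top_of_normalizer_le {R L M : Type*} [CommRing R] [LieRing L]
    [LieAlgebra R L] [AddCommGroup M] [Module R M] [LieRingModule L M] [LieModule R L M]
    [LieModule.IsNilpotent L M] {N : LieSubmodule R L M} (h : N.normalizer ≤ N) : N = ⊤ := by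
  obtain ⟨k, hk⟩ :=
    (LieModule.isNilpotent_iff_exists_ucs_eq_top R (L := L) (M := M)).mp inferInstance
  exact eq_top_iff.mpr (hk ▸ ucs_le_of_normalizer_eq_self (h.antisymm N.le_normalizer) k)

namespace LieAlgebra

section CommRing

variable {R L : Type*} [CommRing R] [LieRing L] [LieAlgebra R L]

/-- The Kirillov form `(X, Y) ↦ ξ ⁅X, Y⁆`. Its kernel is the coadjoint isotropy algebra of `ξ`,
so `L` is exact symplectic iff some `kirillovForm ξ` is `SeparatingLeft`. -/
def kirillovForm (ξ : Dual R L) : LinearMap.BilinForm R L :=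
  (LieModule.toEnd R L L : L →ₗ[R] Module.End R L).compr₂ ξ

@[simp]
lemma kirillovForm_apply (ξ : Dual R L) (X Y : L) : kirillovForm ξ X Y = ξ ⁅X, Y⁆ := rfl

lemma kirillovForm_isAlt (ξ : Dual R L) : (kirillovForm ξ).IsAlt := fun X => by
  rw [kirillovForm_apply, lie_self, map_zero]

lemma mem_ker_kirillovForm {ξ : Dual R L} {X : L} :
    X ∈ LinearMap.ker (kirillovForm ξ) ↔ ∀ Y, ξ ⁅X, Y⁆ = 0 := by
  simp [LinearMap.ext_iff]

lemma mem_ker_kirillovForm_comp_subtype {I : LieIdeal R L} {ξ : Dual R L} {X : I} :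
    X ∈ LinearMap.ker (kirillovForm (ξ ∘ₗ I.toSubmodule.subtype)) ↔
      (X : L) ∈ (kirillovForm ξ).orthogonal I.toSubmodule := by
  rw [mem_ker_kirillovForm, LinearMap.BilinForm.mem_orthogonal_iff]
  refine ⟨fun h W hW => ?_, fun h Y => ?_⟩
  · rw [kirillovForm_apply, ← lie_skew, map_neg, neg_eq_zero]
    exact h ⟨W, hW⟩
  · have hY := h Y Y.2
    rwa [kirillovForm_apply, ← lie_skew, map_neg, neg_eq_zero] at hY

lemma not_center_le_ker_of_ker_kirillovForm_eq_center [LieRing.IsNilpotent L] {ℓ : Dual R L}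
    (hℓ : LinearMap.ker (kirillovForm ℓ) = (center R L).toSubmodule) (hc : center R L ≠ ⊤) :
    ¬ (center R L).toSubmodule ≤ LinearMap.ker ℓ := by
  intro hle
  refine hc (LieSubmodule.eq_top_of_normalizer_le fun W hW => ?_)
  rw [← LieSubmodule.mem_toSubmodule, ← hℓ, mem_ker_kirillovForm]
  intro Y
  rw [← lie_skew, map_neg, hle (hW Y), neg_zero]

end CommRing

section Field

variable {K L : Type*} [Field K] [LieRing L] [LieAlgebra K L]

lemma finrank_orthogonal_kirillovForm [FiniteDimensional K L] {ξ : Dual K L}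
    (hξ : (kirillovForm ξ).SeparatingLeft) (W : Submodule K L) :
    finrank K ((kirillovForm ξ).orthogonal W) = finrank K (L ⧸ W) := by
  rw [LinearMap.BilinForm.finrank_orthogonal
      ((kirillovForm_isAlt ξ).isRefl.nondegenerate_iff_separatingLeft.mpr hξ),
    ← W.finrank_quotient_add_finrank, Nat.add_sub_cancel]

lemma exists_ker_kirillovForm_eq_center_apply_ne_zero [Nontrivial L] [LieRing.IsNilpotent L]
    {ℓ₀ : Dual K L} (hℓ₀ : LinearMap.ker (kirillovForm ℓ₀) = (center K L).toSubmodule) :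
    ∃ ℓ : Dual K L, LinearMap.ker (kirillovForm ℓ) = (center K L).toSubmodule ∧
      ∃ Z ∈ center K L, ℓ Z ≠ 0 := by
  by_cases hc : center K L = ⊤
  · obtain ⟨Z, hZ⟩ := exists_ne (0 : L)
    obtain ⟨ℓ, hℓ⟩ := Projective.exists_dual_ne_zero K hZ
    have : IsLieAbelian L := (isLieAbelian_iff_center_eq_top K L).mpr hc
    refine ⟨ℓ, ?_, Z, hc ▸ LieSubmodule.mem_top Z, hℓ⟩
    rw [hc, LieSubmodule.top_toSubmodule, eq_top_iff]
    exact fun X _ => mem_ker_kirillovForm.mpr fun Y => by rw [trivial_lie_zero, map_zero]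
  · obtain ⟨Z, hZ, hℓZ⟩ := Set.not_subset.mp
      (not_center_le_ker_of_ker_kirillovForm_eq_center hℓ₀ hc)
    exact ⟨ℓ₀, hℓ₀, Z, hZ, hℓZ⟩

end Field

end LieAlgebra

section CentreOfIdeal

open LieAlgebra

variable {g : Type*} [LieRing g] [LieAlgebra ℝ g] {n : LieIdeal ℝ g}

lemma lie_eq_zero_of_mem_centreOfIdeal {W Z : g} (hW : W ∈ n) (hZ : Z ∈ centreOfIdeal g n) :
    ⁅W, Z⁆ = 0 := by
  rw [← lie_skew, hZ.2 W hW, neg_zero]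

lemma lie_mem_centreOfIdeal (Y : g) {Z : g} (hZ : Z ∈ centreOfIdeal g n) :
    ⁅Y, Z⁆ ∈ centreOfIdeal g n := by
  refine ⟨n.lie_mem hZ.1, fun W hW => ?_⟩
  have h := leibniz_lie Y Z W
  rw [hZ.2 W hW, lie_zero, hZ.2 _ (n.lie_mem hW), add_zero] at h
  exact h.symm

lemma coe_mem_centreOfIdeal_iff {X : n} : (X : g) ∈ centreOfIdeal g n ↔ X ∈ center ℝ n := by
  refine ⟨fun hX Y => Subtype.ext (lie_eq_zero_of_mem_centreOfIdeal Y.2 hX),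
    fun hX => ⟨X.2, fun Y hY => ?_⟩⟩
  rw [← lie_skew, neg_eq_zero]
  exact congrArg Subtype.val (hX ⟨Y, hY⟩)

lemma setOf_eq_centreOfIdeal_iff (ℓ : Dual ℝ n) :
    {X : n | ∀ Y : n, ℓ ⁅X, Y⁆ = 0} = {X : n | (X : g) ∈ centreOfIdeal g n} ↔
      LinearMap.ker (kirillovForm ℓ) = (center ℝ n).toSubmodule := by
  simp only [← SetLike.coe_set_eq, Set.ext_iff, Set.mem_ofPred_eq, SetLike.mem_coe,
    mem_ker_kirillovForm, LieSubmodule.mem_toSubmodule, coe_mem_centreOfIdeal_iff]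

lemma centreOfIdeal_ne_bot [LieRing.IsNilpotent n] (hn : n ≠ ⊥) : centreOfIdeal g n ≠ ⊥ := by
  have : Nontrivial n := (LieSubmodule.nontrivial_iff_ne_bot ℝ g g).mpr hn
  have := non_trivial_center_of_isNilpotent (R := ℝ) (L := n)
  obtain ⟨X, hX⟩ := exists_ne (0 : center ℝ n)
  exact (Submodule.ne_bot_iff _).mpr ⟨X, coe_mem_centreOfIdeal_iff.mpr X.2, by simpa using hX⟩

lemma centreOfIdeal_le_orthogonal (ξ : Dual ℝ g) :
    centreOfIdeal g n ≤ (kirillovForm ξ).orthogonal n.toSubmodule := fun _ hZ =>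
  LinearMap.BilinForm.mem_orthogonal_iff.mpr fun _ hW => by
    rw [kirillovForm_apply, lie_eq_zero_of_mem_centreOfIdeal hW hZ, map_zero]

lemma centreOfIdeal_eq_orthogonal [FiniteDimensional ℝ g] [LieRing.IsNilpotent n] (hn : n ≠ ⊥)
    (hcodim : finrank ℝ (g ⧸ n) = 1) {ξ : Dual ℝ g} (hξ : (kirillovForm ξ).SeparatingLeft) :
    centreOfIdeal g n = (kirillovForm ξ).orthogonal n.toSubmodule := by
  refine Submodule.eq_of_le_of_finrank_le (centreOfIdeal_le_orthogonal ξ) ?_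
  rw [finrank_orthogonal_kirillovForm hξ]
  exact hcodim.trans_le (Submodule.one_le_finrank_iff.mpr (centreOfIdeal_ne_bot hn))

lemma separatingLeft_kirillovForm (hcodim : finrank ℝ (g ⧸ n) = 1) {ξ : Dual ℝ g} {X Z : g}
    (hz : centreOfIdeal g n = ℝ ∙ Z) (hXZ : ⁅X, Z⁆ ≠ 0) (hξZ : ξ Z ≠ 0)
    (hrad : ∀ W ∈ n, (∀ Y ∈ n, ξ ⁅W, Y⁆ = 0) → W ∈ centreOfIdeal g n) :
    (kirillovForm ξ).SeparatingLeft := by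
  have hZ : Z ∈ centreOfIdeal g n := hz ▸ Submodule.mem_span_singleton_self Z
  obtain ⟨a, ha⟩ := Submodule.mem_span_singleton.mp (hz ▸ lie_mem_centreOfIdeal X hZ)
  have ha0 : a ≠ 0 := by
    rintro rfl
    exact hXZ (by rw [← ha, zero_smul])
  have hXn : X ∉ n := fun hX => hXZ (lie_eq_zero_of_mem_centreOfIdeal hX hZ)
  intro W hW
  obtain ⟨c, hc⟩ := Submodule.exists_sub_smul_mem_of_finrank_quotient_eq_one hcodim hXn W
  have hc0 : c = 0 := by
    have h := hW Z
    rw [kirillovForm_apply, ← sub_add_cancel W (c • X), add_lie,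
      lie_eq_zero_of_mem_centreOfIdeal hc hZ, zero_add, smul_lie, ← ha, smul_smul, map_smul,
      smul_eq_mul] at h
    simpa [ha0, hξZ] using h
  rw [hc0, zero_smul, sub_zero] at hc
  obtain ⟨t, rfl⟩ := Submodule.mem_span_singleton.mp (hz ▸ hrad W hc fun Y _ => hW Y)
  have h := hW X
  rw [kirillovForm_apply, smul_lie, ← lie_skew, ← ha, smul_neg, map_neg, map_smul, map_smul] at h
  simp only [neg_eq_zero, smul_eq_mul, mul_eq_zero, ha0, hξZ, or_false] at h
  rw [h, zero_smul]

lemma exists_separatingLeft_kirillovForm (hcodim : finrank ℝ (g ⧸ n) = 1)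
    (hdim : finrank ℝ (centreOfIdeal g n) = 1) {X Z : g} (hZ : Z ∈ centreOfIdeal g n)
    (hXZ : ⁅X, Z⁆ ≠ 0) {ℓ : Dual ℝ n}
    (hℓ : LinearMap.ker (kirillovForm ℓ) = (center ℝ n).toSubmodule) {Z₁ : n}
    (hZ₁ : Z₁ ∈ center ℝ n) (hℓZ₁ : ℓ Z₁ ≠ 0) :
    ∃ ξ : Dual ℝ g, (kirillovForm ξ).SeparatingLeft := by
  obtain ⟨ξ, rfl⟩ := LinearMap.exists_extend ℓ
  have hz := eq_span_singleton_of_mem_of_finrank_eq_one hdim (coe_mem_centreOfIdeal_iff.mpr hZ₁)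
    fun h => hℓZ₁ (by rw [LinearMap.comp_apply, Submodule.subtype_apply, h, map_zero])
  obtain ⟨b, rfl⟩ := Submodule.mem_span_singleton.mp (hz ▸ hZ)
  refine ⟨ξ, separatingLeft_kirillovForm hcodim hz (X := X)
    (fun h => hXZ (by rw [lie_smul, h, smul_zero])) hℓZ₁ fun W hW hWn => ?_⟩
  have hWker : (⟨W, hW⟩ : n) ∈ LinearMap.ker (kirillovForm (ξ ∘ₗ n.toSubmodule.subtype)) :=
    mem_ker_kirillovForm.mpr fun Y => hWn Y Y.2
  rw [hℓ] at hWker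
  exact coe_mem_centreOfIdeal_iff.mpr hWker

end CentreOfIdeal

/-- Lemma 3.4, (i) ⇔ (v): for a finite-dimensional real Lie algebra `g` with a nonzero
nilpotent Lie ideal `n` of codimension 1 and centre `z` of `n`, `g` is exact symplectic if and
only if `[g,z] ≠ 0`, `dim z = 1`, and `n` admits a linear functional `ℓ` with `n(ℓ) = z`. -/
theorem exactSymplectic_iff_flat
    (g : Type*) [LieRing g] [LieAlgebra ℝ g] [FiniteDimensional ℝ g]
    (n : LieIdeal ℝ g) [LieRing.IsNilpotent ↥n] (hn : n ≠ ⊥)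
    (hcodim : finrank ℝ (g ⧸ n) = 1) :
    (∃ ξ₀ : Module.Dual ℝ g, ∀ X : g, (∀ Y : g, ξ₀ ⁅X, Y⁆ = 0) → X = 0) ↔
    ((∃ X Z : g, Z ∈ centreOfIdeal g n ∧ ⁅X, Z⁆ ≠ 0) ∧
      finrank ℝ (centreOfIdeal g n) = 1 ∧
      ∃ ℓ : Module.Dual ℝ ↥n,
        {X : ↥n | ∀ Y : ↥n, ℓ ⁅X, Y⁆ = 0} = {X : ↥n | (X : g) ∈ centreOfIdeal g n}) := by
  constructor
  · rintro ⟨ξ, hξ⟩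
    have hz := centreOfIdeal_eq_orthogonal hn hcodim (ξ := ξ) hξ
    obtain ⟨Z, hZ, hZ0⟩ := Submodule.exists_mem_ne_zero_of_ne_bot (centreOfIdeal_ne_bot hn)
    refine ⟨?_, ?_, ξ ∘ₗ n.toSubmodule.subtype, (setOf_eq_centreOfIdeal_iff _).mpr ?_⟩
    · by_contra! h
      exact hZ0 (hξ Z fun Y => by rw [← lie_skew, h Y Z hZ, neg_zero, map_zero])
    · rw [hz, LieAlgebra.finrank_orthogonal_kirillovForm hξ]
      exact hcodim
    · ext X
      rw [LieAlgebra.mem_ker_kirillovForm_comp_subtype, ← hz, LieSubmodule.mem_toSubmodule,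
        coe_mem_centreOfIdeal_iff]
  · rintro ⟨⟨X, Z, hZ, hXZ⟩, hdim, ℓ₀, hℓ₀⟩
    have : Nontrivial n := nontrivial_of_ne ⟨Z, hZ.1⟩ 0 fun h =>
      hXZ (by rw [show Z = 0 from congrArg Subtype.val h, lie_zero])
    obtain ⟨ℓ, hℓ, Z₁, hZ₁, hℓZ₁⟩ := LieAlgebra.exists_ker_kirillovForm_eq_center_apply_ne_zero
      ((setOf_eq_centreOfIdeal_iff ℓ₀).mp hℓ₀)
    exact exists_separatingLeft_kirillovForm hcodim hdim hZ hXZ hℓ hZ₁ hℓZ₁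
end

section
/- Let n be a finite-dimensional real nilpotent Lie algebra with centre z := {X ∈ n | ∀ Y ∈ n, [X,Y] = 0}, and let D : n → n be a derivation such that the ℂ-linear extension of D|_z has no purely imaginary eigenvalue (σ(D|_z) ∩ iℝ = ∅). Then for every t ∈ ℝ with t ≠ 0, every linear functional ξ on n with ξ|_z ≠ 0, and every X ∈ n, one has ξ ∘ exp(tD) ≠ ξ ∘ exp(ad X). -/
/-!
Both `exp(tD)` and `exp(ad X)` preserve the centre `z`, and `exp(ad X)` fixes it pointwise. On the
other hand `exp(tD) - 1` is injective on `z`: after complexification, if `exp(tD)` fixed a nonzero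
vector of `z`, the intersection of `ℂ ⊗ z` with the fixed space of `exp(tD)` would be a nonzero
subspace, invariant under `D` because `D` commutes with `exp(tD)`; an eigenvector of `tD` in it has
an eigenvalue `μ` with `e^μ = 1`, so `Re μ = 0`, which the spectral hypothesis forbids. Hence
`exp(tD) - 1` maps `z` onto `z`, and writing a central `Z` with `ξ Z ≠ 0` as `exp(tD) W - W` with
`W ∈ z` gives `ξ Z = ξ (exp(ad X) W) - ξ W = 0`.
-/

open scoped Matrix Nat TensorProduct
open NormedSpace

theorem Module.End.exists_eigenvector_mem {K V : Type*} [Field K] [IsAlgClosed K]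
    [AddCommGroup V] [Module K V] [FiniteDimensional K V] {f : Module.End K V}
    {S : Submodule K V} (hS : ∀ v ∈ S, f v ∈ S) (hS₀ : S ≠ ⊥) :
    ∃ μ : K, ∃ u ∈ S, u ≠ 0 ∧ f u = μ • u := by
  have : Nontrivial S := Submodule.nontrivial_iff_ne_bot.mpr hS₀
  obtain ⟨μ, hμ⟩ := Module.End.exists_eigenvalue (f.restrict hS)
  obtain ⟨u, hu⟩ := hμ.exists_hasEigenvector
  refine ⟨μ, u, u.2, fun h => hu.2 (Subtype.ext h), ?_⟩
  simpa using congrArg Subtype.val hu.apply_eq_smul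

theorem LinearMap.baseChange_mem_baseChange {R A M : Type*} [CommSemiring R] [CommSemiring A]
    [Algebra R A] [AddCommMonoid M] [Module R M] {f : Module.End R M} {C : Submodule R M}
    (hC : ∀ v ∈ C, f v ∈ C) : ∀ u ∈ C.baseChange A, f.baseChange A u ∈ C.baseChange A := by
  rintro _ ⟨u, rfl⟩
  refine ⟨(f.restrict hC).baseChange A u, ?_⟩
  rw [← LinearMap.comp_apply, ← LinearMap.comp_apply, ← LinearMap.baseChange_comp,
    ← LinearMap.baseChange_comp]
  rfl

theorem Module.End.exists_apply_sub_self_eq {K V : Type*} [Field K] [AddCommGroup V] [Module K V]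
    {g : Module.End K V} {C : Submodule K V} [FiniteDimensional K C] (hC : ∀ v ∈ C, g v ∈ C)
    (hfix : ∀ z ∈ C, g z = z → z = 0) {y : V} (hy : y ∈ C) : ∃ w ∈ C, g w - w = y := by
  let T : C →ₗ[K] C := (g - 1).restrict fun v hv => C.sub_mem (hC v hv) hv
  have hT : Function.Injective T := by
    refine (injective_iff_map_eq_zero T).2 fun w hw => Subtype.ext (hfix w w.2 ?_)
    simpa [T, sub_eq_zero] using congrArg Subtype.val hw
  obtain ⟨w, hw⟩ := LinearMap.injective_iff_surjective.1 hT ⟨y, hy⟩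
  exact ⟨w, w.2, by simpa [T] using congrArg Subtype.val hw⟩

theorem LieAlgebra.apply_mem_center_of_leibniz {R L : Type*} [CommRing R] [LieRing L]
    [LieAlgebra R L] {D : L →ₗ[R] L} (hD : ∀ x y : L, D ⁅x, y⁆ = ⁅D x, y⁆ + ⁅x, D y⁆) {z : L}
    (hz : z ∈ center R L) : D z ∈ center R L := by
  rw [center, LieModule.mem_maxTrivSubmodule] at hz ⊢
  intro x
  simpa [hz] using (hD x z).symm

namespace Matrix

variable {𝕂 n : Type*} [RCLike 𝕂] [Fintype n] [DecidableEq n]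

-- The operator norm is only needed to invoke the Banach-algebra lemma; it induces the
-- product topology.
theorem hasSum_exp (A : Matrix n n 𝕂) : HasSum (fun k => (k !⁻¹ : 𝕂) • A ^ k) (exp A) := by
  open scoped Norms.Operator in exact exp_series_hasSum_exp' A

theorem hasSum_exp_mulVec (A : Matrix n n 𝕂) (v : n → 𝕂) :
    HasSum (fun k => (k !⁻¹ : 𝕂) • (A ^ k *ᵥ v)) (exp A *ᵥ v) := by
  simpa only [Function.comp_def, LinearMap.flip_apply, mulVecBilin_apply, smul_mulVec] using
    (hasSum_exp A).map ((mulVecBilin 𝕂 𝕂).flip v) (LinearMap.continuous_of_finiteDimensional _)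

theorem exp_mulVec_of_mulVec_eq_smul {A : Matrix n n 𝕂} {v : n → 𝕂} {μ : 𝕂}
    (h : A *ᵥ v = μ • v) : exp A *ᵥ v = exp μ • v := by
  have hpow (k : ℕ) : A ^ k *ᵥ v = μ ^ k • v := by
    induction k with
    | zero => simp
    | succ k ih => rw [pow_succ', ← mulVec_mulVec, ih, mulVec_smul, h, smul_smul, pow_succ]
  refine (hasSum_exp_mulVec A v).unique ?_
  simpa only [hpow, smul_smul, smul_eq_mul] using (exp_series_hasSum_exp' (𝕂 := 𝕂) μ).smul_const v

theorem exp_mulVec_mem {A : Matrix n n 𝕂} {S : Submodule 𝕂 (n → 𝕂)} (hS : ∀ w ∈ S, A *ᵥ w ∈ S)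
    {v : n → 𝕂} (hv : v ∈ S) : exp A *ᵥ v ∈ S := by
  have hpow (k : ℕ) : A ^ k *ᵥ v ∈ S := by
    induction k with
    | zero => simpa using hv
    | succ k ih => rw [pow_succ', ← mulVec_mulVec]; exact hS _ ih
  exact S.closed_of_finiteDimensional.mem_of_tendsto (hasSum_exp_mulVec A v).tendsto_sum_nat
    (.of_forall fun k => S.sum_mem fun i _ => S.smul_mem _ (hpow i))

end Matrix

namespace Module.Basis

variable {𝕂 V ι : Type*} [RCLike 𝕂] [AddCommGroup V] [Module 𝕂 V] [Fintype ι] [DecidableEq ι]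

noncomputable def expEnd (b : Basis ι 𝕂 V) (f : Module.End 𝕂 V) : Module.End 𝕂 V :=
  Matrix.toLin b b (exp (LinearMap.toMatrix b b f))

variable (b : Basis ι 𝕂 V)

theorem repr_expEnd_apply (f : Module.End 𝕂 V) (v : V) :
    ⇑(b.repr (b.expEnd f v)) = exp (LinearMap.toMatrix b b f) *ᵥ ⇑(b.repr v) :=
  Matrix.repr_toLin _ _ _ _

theorem expEnd_apply_of_apply_eq_smul {f : Module.End 𝕂 V} {v : V} {μ : 𝕂} (h : f v = μ • v) :
    b.expEnd f v = exp μ • v := by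
  refine b.equivFun.injective ?_
  simp only [equivFun_apply, repr_expEnd_apply, map_smul]
  refine Matrix.exp_mulVec_of_mulVec_eq_smul ?_
  rw [LinearMap.toMatrix_mulVec_repr, h, map_smul, Finsupp.coe_smul]

theorem expEnd_apply_of_apply_eq_zero {f : Module.End 𝕂 V} {v : V} (h : f v = 0) :
    b.expEnd f v = v := by
  simpa using b.expEnd_apply_of_apply_eq_smul (μ := 0) (by simpa using h)

theorem expEnd_mem {f : Module.End 𝕂 V} {S : Submodule 𝕂 V} (hS : ∀ w ∈ S, f w ∈ S) {v : V}
    (hv : v ∈ S) : b.expEnd f v ∈ S := by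
  have hmem (w : V) : w ∈ S ↔ ⇑(b.repr w) ∈ S.comap b.equivFun.symm.toLinearMap := by
    simp [← equivFun_apply]
  rw [hmem, repr_expEnd_apply]
  refine Matrix.exp_mulVec_mem (fun w hw => ?_) ((hmem v).1 hv)
  rw [← b.equivFun.apply_symm_apply w, equivFun_apply, LinearMap.toMatrix_mulVec_repr, ← hmem]
  exact hS _ hw

theorem commute_expEnd (f : Module.End 𝕂 V) : Commute (b.expEnd f) f := by
  conv_rhs => rw [← Matrix.toLin_toMatrix b b f]
  exact (Commute.refl _).exp_left.map (Matrix.toLinAlgEquiv b)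

end Module.Basis

theorem Module.Basis.baseChange_expEnd {V ι : Type*} [AddCommGroup V] [Module ℝ V] [Fintype ι]
    [DecidableEq ι] (b : Basis ι ℝ V) (f : Module.End ℝ V) :
    (b.expEnd f).baseChange ℂ = (Algebra.TensorProduct.basis ℂ b).expEnd (f.baseChange ℂ) := by
  refine (LinearMap.toMatrix (Algebra.TensorProduct.basis ℂ b)
    (Algebra.TensorProduct.basis ℂ b)).injective ?_
  rw [LinearMap.toMatrix_baseChange, Module.Basis.expEnd, Module.Basis.expEnd,
    LinearMap.toMatrix_toLin, LinearMap.toMatrix_toLin, LinearMap.toMatrix_baseChange]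
  open scoped Matrix.Norms.Operator in
  exact map_exp (algebraMap ℝ ℂ).mapMatrix (continuous_id.matrix_map (continuous_algebraMap ℝ ℂ)) _

theorem Module.Basis.eq_zero_of_expEnd_smul_apply_eq_self {V ι : Type*} [AddCommGroup V]
    [Module ℝ V] [Fintype ι] [DecidableEq ι] (b : Basis ι ℝ V) {f : Module.End ℝ V}
    {C : Submodule ℝ V} (hC : ∀ v ∈ C, f v ∈ C)
    (hspec : ∀ (μ : ℂ) (u : ℂ ⊗[ℝ] V), u ≠ 0 → u ∈ C.baseChange ℂ →
      f.baseChange ℂ u = μ • u → μ.re ≠ 0)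
    {t : ℝ} (ht : t ≠ 0) {z : V} (hz : z ∈ C) (hfix : b.expEnd (t • f) z = z) : z = 0 := by
  by_contra hz₀
  let bc := Algebra.TensorProduct.basis ℂ b
  have := Module.Finite.of_basis bc
  let g := (t • f).baseChange ℂ
  let S := C.baseChange ℂ ⊓ (bc.expEnd g).eigenspace 1
  have hS : ∀ u ∈ S, g u ∈ S := fun u hu =>
    ⟨LinearMap.baseChange_mem_baseChange (fun v hv => C.smul_mem t (hC v hv)) u hu.1,
      Module.End.mapsTo_genEigenspace_of_comm (bc.commute_expEnd g) 1 1 hu.2⟩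
  have hS₀ : S ≠ ⊥ := by
    refine (Submodule.ne_bot_iff S).2 ⟨1 ⊗ₜ z, ⟨Submodule.tmul_mem_baseChange_of_mem 1 hz, ?_⟩,
      by rwa [Ne, Module.FaithfullyFlat.one_tmul_eq_zero_iff]⟩
    refine Module.End.mem_eigenspace_iff.2 ?_
    rw [one_smul, ← b.baseChange_expEnd, LinearMap.baseChange_tmul, hfix]
  obtain ⟨μ, u, huS, hu₀, hgu⟩ := Module.End.exists_eigenvector_mem hS hS₀
  have hexp : Complex.exp μ = 1 := by
    refine smul_left_injective ℂ hu₀ ?_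
    have h := bc.expEnd_apply_of_apply_eq_smul hgu
    rw [Module.End.mem_eigenspace_iff.1 huS.2, ← Complex.exp_eq_exp_ℂ] at h
    simpa using h.symm
  refine hspec (μ / t) u hu₀ huS.1 ?_ ?_
  · have htc : (t : ℂ) ≠ 0 := Complex.ofReal_ne_zero.2 ht
    change (t • f).baseChange ℂ u = μ • u at hgu
    rw [LinearMap.baseChange_smul, LinearMap.smul_apply, ← algebraMap_smul ℂ t] at hgu
    rw [div_eq_inv_mul, mul_smul, ← hgu, Complex.coe_algebraMap, inv_smul_smul₀ htc]
  · have h := congrArg (‖·‖) hexp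
    rw [Complex.norm_exp, norm_one, Real.exp_eq_one_iff] at h
    rw [Complex.div_ofReal_re, h, zero_div]

theorem exp_coadjoint_action_free_general
    (L : Type*) [LieRing L] [LieAlgebra ℝ L] [FiniteDimensional ℝ L]
    (D : L →ₗ[ℝ] L)
    (hD : ∀ x y : L, D ⁅x, y⁆ = ⁅D x, y⁆ + ⁅x, D y⁆)
    (hspec : ∀ (μ : ℂ) (v : ℂ ⊗[ℝ] L), v ≠ 0 →
      v ∈ Submodule.baseChange ℂ (LieAlgebra.center ℝ L).toSubmodule →
      LinearMap.baseChange ℂ D v = μ • v → μ.re ≠ 0)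
    (d : ℕ) (b : Module.Basis (Fin d) ℝ L) :
    ∀ t : ℝ, t ≠ 0 →
      ∀ ξ : Module.Dual ℝ L, (∃ Z : L, (∀ Y : L, ⁅Z, Y⁆ = 0) ∧ ξ Z ≠ 0) →
      ∀ X : L,
        ¬ (∀ Y : L,
          ξ (Matrix.toLin b b (NormedSpace.exp (LinearMap.toMatrix b b (t • D))) Y)
            = ξ (Matrix.toLin b b
                (NormedSpace.exp (LinearMap.toMatrix b b (LieAlgebra.ad ℝ L X))) Y)) := by
  intro t ht ξ ⟨Z, hZ, hξZ⟩ X hξ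
  let C := (LieAlgebra.center ℝ L).toSubmodule
  have hDC : ∀ v ∈ C, D v ∈ C := fun v hv => LieAlgebra.apply_mem_center_of_leibniz hD hv
  have hGC : ∀ v ∈ C, b.expEnd (t • D) v ∈ C := fun v hv =>
    b.expEnd_mem (fun w hw => C.smul_mem t (hDC w hw)) hv
  have hZC : Z ∈ C := (LieModule.mem_maxTrivSubmodule ℝ L L Z).2 fun Y => by
    rw [← lie_skew, hZ, neg_zero]
  obtain ⟨W, hWC, hW⟩ := Module.End.exists_apply_sub_self_eq hGC
    (fun z hz => b.eq_zero_of_expEnd_smul_apply_eq_self hDC hspec ht hz) hZC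
  have hFW : b.expEnd (LieAlgebra.ad ℝ L X) W = W :=
    b.expEnd_apply_of_apply_eq_zero ((LieModule.mem_maxTrivSubmodule ℝ L L W).1 hWC X)
  exact hξZ (by rw [← hW, map_sub, Module.Basis.expEnd, hξ W, ← Module.Basis.expEnd, hFW, sub_self])

/-- Lemma 4.5(i): let `L` be a finite-dimensional real nilpotent Lie algebra with centre `z`,
and let `D : L → L` be a derivation such that the complexification of `D|_z` has no purely
imaginary eigenvalue (`σ(D|_z) ∩ iℝ = ∅`).  Then for every `t ≠ 0`, every linear functional
`ξ` on `L` with `ξ|_z ≠ 0`, and every `X ∈ L`, one has `ξ ∘ exp(tD) ≠ ξ ∘ exp(ad X)`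
(the exponentials being computed, via an arbitrary basis `b`, through the matrix exponential,
which is independent of the choice). -/
theorem exp_coadjoint_action_free
    (L : Type*) [LieRing L] [LieAlgebra ℝ L] [FiniteDimensional ℝ L]
    [LieRing.IsNilpotent L]
    (D : L →ₗ[ℝ] L)
    (hD : ∀ x y : L, D ⁅x, y⁆ = ⁅D x, y⁆ + ⁅x, D y⁆)
    (hspec : ∀ (μ : ℂ) (v : ℂ ⊗[ℝ] L), v ≠ 0 →
      v ∈ Submodule.baseChange ℂ (LieAlgebra.center ℝ L).toSubmodule →
      LinearMap.baseChange ℂ D v = μ • v → μ.re ≠ 0)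
    (d : ℕ) (b : Module.Basis (Fin d) ℝ L) :
    ∀ t : ℝ, t ≠ 0 →
      ∀ ξ : Module.Dual ℝ L, (∃ Z : L, (∀ Y : L, ⁅Z, Y⁆ = 0) ∧ ξ Z ≠ 0) →
      ∀ X : L,
        ¬ (∀ Y : L,
          ξ (Matrix.toLin b b (NormedSpace.exp (LinearMap.toMatrix b b (t • D))) Y)
            = ξ (Matrix.toLin b b
                (NormedSpace.exp (LinearMap.toMatrix b b (LieAlgebra.ad ℝ L X))) Y)) :=
  exp_coadjoint_action_free_general L D hD hspec d b
end
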